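/- The transformation r5 of the quantum degenerate Garnier system G(2,3) is a quantum canonical transformation: suppose x1 is a unit of R, and define q1 = x1^{-1}, p1 = −x1^2y1 − x1x2y2 − (1 + α1 − α2 + 2α3)·x1 + (1/2)x1^{-1}, q2 = x2x1^{-1}, p2 = x1y2 − 1/2. Then (q1, p1, q2, p2) again satisfy the canonical commutation relations: [q1,p1] = [q2,p2] = h and [q1,q2] = [p1,p2] = [q1,p2] = [q2,p1] = 0. -/

import Mathlib

/-!
Let `E = x₁y₁ + x₂y₂` be the Euler operator. Then `p₁ = -x₁E - A x₁ + ½ x₁⁻¹` with `A` central,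
and `ad E` multiplies `x₁, x₂` by `-h` and `y₂, x₁⁻¹` by `h`, so the degree-zero elements
`x₁y₂ = p₂ + ½` and `q₂ = x₂x₁⁻¹` commute with `E`. Hence `[q₁, p₁] = -x₁[x₁⁻¹, E] = h`,
`[q₂, p₂] = x₁[x₂, y₂]x₁⁻¹ = h`, and the remaining brackets vanish because `q₁`, `q₂`, `p₂`
commute with `x₁` and with `E`.
-/

section

attribute [local instance] LieRing.ofAssociativeRing

variable {R : Type*} [Ring R]

namespace Ring

theorem lie_mul (a b c : R) : ⁅a, b * c⁆ = ⁅a, b⁆ * c + b * ⁅a, c⁆ := by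
  simp only [lie_def]; noncomm_ring

theorem mul_lie (a b c : R) : ⁅a * b, c⁆ = a * ⁅b, c⁆ + ⁅a, c⁆ * b := by
  simp only [lie_def]; noncomm_ring

theorem lie_units_inv (e : R) (u : Rˣ) : ⁅e, (↑u⁻¹ : R)⁆ = -(↑u⁻¹ * ⁅e, (u : R)⁆ * ↑u⁻¹) := by
  simp only [lie_def, mul_sub, sub_mul, ← mul_assoc, Units.inv_mul, one_mul]
  simp only [mul_assoc, Units.mul_inv, mul_one, neg_sub]

theorem lie_mul_eq_zero_of_lie_eq_mul {e a b k : R} (hk : ∀ r, Commute k r)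
    (ha : ⁅e, a⁆ = k * a) (hb : ⁅e, b⁆ = -(k * b)) : ⁅e, a * b⁆ = 0 := by
  rw [lie_mul, ha, hb, mul_neg, ← mul_assoc, (hk a).eq, add_neg_cancel]

theorem lie_units_inv_of_lie_eq_mul {e k : R} {u : Rˣ} (hk : ∀ r, Commute k r)
    (hu : ⁅e, (u : R)⁆ = k * u) : ⁅e, (↑u⁻¹ : R)⁆ = -(k * ↑u⁻¹) := by
  rw [lie_units_inv, hu, ← mul_assoc, ← (hk _).eq, mul_assoc, mul_assoc, Units.mul_inv, mul_one]

end Ring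

open Ring

structure IsCanonical (h x1 y1 x2 y2 : R) : Prop where
  lie_x1_y1 : ⁅x1, y1⁆ = h
  lie_x2_y2 : ⁅x2, y2⁆ = h
  lie_x1_x2 : ⁅x1, x2⁆ = 0
  lie_y1_y2 : ⁅y1, y2⁆ = 0
  lie_x1_y2 : ⁅x1, y2⁆ = 0
  lie_x2_y1 : ⁅x2, y1⁆ = 0

def euler (x1 y1 x2 y2 : R) : R := x1 * y1 + x2 * y2

namespace IsCanonical

variable {h x1 y1 x2 y2 : R}

theorem lie_euler_x1 (H : IsCanonical h x1 y1 x2 y2) (hh : ∀ r, Commute h r) :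
    ⁅euler x1 y1 x2 y2, x1⁆ = -(h * x1) := by
  rw [euler, add_lie, mul_lie, mul_lie, ← lie_skew y1 x1, ← lie_skew y2 x1, ← lie_skew x2 x1,
    H.lie_x1_y1, H.lie_x1_y2, H.lie_x1_x2, lie_self, (hh x1).eq]
  simp

theorem lie_euler_x2 (H : IsCanonical h x1 y1 x2 y2) (hh : ∀ r, Commute h r) :
    ⁅euler x1 y1 x2 y2, x2⁆ = -(h * x2) := by
  rw [euler, add_lie, mul_lie, mul_lie, ← lie_skew y1 x2, ← lie_skew y2 x2, H.lie_x2_y1,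
    H.lie_x2_y2, H.lie_x1_x2, lie_self, (hh x2).eq]
  simp

theorem lie_euler_y2 (H : IsCanonical h x1 y1 x2 y2) : ⁅euler x1 y1 x2 y2, y2⁆ = h * y2 := by
  rw [euler, add_lie, mul_lie, mul_lie, H.lie_y1_y2, H.lie_x1_y2, H.lie_x2_y2, lie_self]
  simp

theorem lie_euler_x1_mul_y2 (H : IsCanonical h x1 y1 x2 y2) (hh : ∀ r, Commute h r) :
    ⁅euler x1 y1 x2 y2, x1 * y2⁆ = 0 :=
  lie_mul_eq_zero_of_lie_eq_mul (k := -h) (fun r => (hh r).neg_left)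
    (by rw [H.lie_euler_x1 hh, neg_mul]) (by rw [H.lie_euler_y2, neg_mul, neg_neg])

theorem lie_euler_units_inv {u : Rˣ} (H : IsCanonical h u y1 x2 y2) (hh : ∀ r, Commute h r) :
    ⁅euler (u : R) y1 x2 y2, (↑u⁻¹ : R)⁆ = h * ↑u⁻¹ := by
  rw [lie_units_inv_of_lie_eq_mul (k := -h) (fun r => (hh r).neg_left)
    (by rw [H.lie_euler_x1 hh, neg_mul]), neg_mul, neg_neg]

theorem lie_euler_x2_mul_units_inv {u : Rˣ} (H : IsCanonical h u y1 x2 y2)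
    (hh : ∀ r, Commute h r) :
    ⁅euler (u : R) y1 x2 y2, x2 * ↑u⁻¹⁆ = 0 :=
  lie_mul_eq_zero_of_lie_eq_mul (k := -h) (fun r => (hh r).neg_left)
    (by rw [H.lie_euler_x2 hh, neg_mul]) (by rw [H.lie_euler_units_inv hh, neg_mul, neg_neg])

theorem r5 {u : Rˣ} (H : IsCanonical h u y1 x2 y2) (hh : ∀ r, Commute h r) {a c d : R}
    (ha : ∀ r, Commute a r) (hc : ∀ r, Commute c r) (hd : ∀ r, Commute d r) :
    IsCanonical h ↑u⁻¹ (-(↑u * euler (u : R) y1 x2 y2) - a * ↑u + c * ↑u⁻¹) (x2 * ↑u⁻¹)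
      (↑u * y2 - d) := by
  have hux2 : Commute (u : R) x2 := commute_iff_lie_eq.mpr H.lie_x1_x2
  have huy2 : Commute (u : R) y2 := commute_iff_lie_eq.mpr H.lie_x1_y2
  have hiu : Commute (↑u⁻¹ : R) u := (Commute.refl _).units_inv_left
  have hiq2 : Commute (↑u⁻¹ : R) (x2 * ↑u⁻¹) := hux2.units_inv_left.mul_right (Commute.refl _)
  have hiuy2 : Commute (↑u⁻¹ : R) (↑u * y2) := hiu.mul_right huy2.units_inv_left
  have huuy2 : Commute (u : R) (↑u * y2) := (Commute.refl _).mul_right huy2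
  have hq2u : Commute (x2 * ↑u⁻¹) u := hux2.symm.mul_left hiu
  have hEp2 : Commute (euler (u : R) y1 x2 y2) (↑u * y2) :=
    commute_iff_lie_eq.mpr (H.lie_euler_x1_mul_y2 hh)
  have hEq2 : Commute (euler (u : R) y1 x2 y2) (x2 * ↑u⁻¹) :=
    commute_iff_lie_eq.mpr (H.lie_euler_x2_mul_units_inv hh)
  refine ⟨?_, ?_, commute_iff_lie_eq.mp hiq2, commute_iff_lie_eq.mp ?_,
    commute_iff_lie_eq.mp (hiuy2.sub_right (hd _).symm), commute_iff_lie_eq.mp ?_⟩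
  · rw [lie_add, lie_sub, lie_neg, lie_mul, commute_iff_lie_eq.mp hiu, ← lie_skew,
      H.lie_euler_units_inv hh, commute_iff_lie_eq.mp ((ha _).symm.mul_right hiu),
      commute_iff_lie_eq.mp ((hc _).symm.mul_right (Commute.refl _))]
    rw [zero_mul, zero_add, mul_neg, neg_neg, ← mul_assoc, ← (hh _).eq, mul_assoc,
      Units.mul_inv, mul_one, sub_zero, add_zero]
  · rw [lie_sub, commute_iff_lie_eq.mp (hd _).symm, sub_zero, mul_lie,
      commute_iff_lie_eq.mp hiuy2, lie_mul, commute_iff_lie_eq.mp hux2.symm, H.lie_x2_y2,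
      mul_zero, zero_mul, zero_add, zero_add, ← (hh _).eq, mul_assoc, Units.mul_inv, mul_one]
  · exact (((huuy2.mul_left hEp2).neg_left.sub_left ((ha _).mul_left huuy2)).add_left
      ((hc _).mul_left hiuy2)).sub_right (hd _).symm
  · exact ((hq2u.mul_right hEq2.symm).neg_right.sub_right
      ((ha _).symm.mul_right hq2u)).add_right ((hc _).symm.mul_right hiq2.symm)

end IsCanonical

end

/-- The transformation r5 of the quantum degenerate Garnier system G(2,3) is a
quantum canonical transformation. -/
theorem quantum_garnier_G23_r5_canonical
    {R : Type*} [Ring R] [Algebra ℚ R]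
    (h α1 α2 α3 : R)
    (hh : ∀ r : R, h * r = r * h)
    (hA1 : ∀ r : R, α1 * r = r * α1)
    (hA2 : ∀ r : R, α2 * r = r * α2)
    (hA3 : ∀ r : R, α3 * r = r * α3)
    (x1 y1 x2 y2 : R)
    (hx1y1 : x1 * y1 - y1 * x1 = h)
    (hx2y2 : x2 * y2 - y2 * x2 = h)
    (hx1x2 : x1 * x2 - x2 * x1 = 0)
    (hy1y2 : y1 * y2 - y2 * y1 = 0)
    (hx1y2 : x1 * y2 - y2 * x1 = 0)
    (hx2y1 : x2 * y1 - y1 * x2 = 0)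
    (x1i : R) (hx1il : x1i * x1 = 1) (hx1ir : x1 * x1i = 1)
    (q1 p1 q2 p2 : R)
    (hq1 : q1 = x1i)
    (hp1 : p1 = -(x1^2 * y1) - x1 * x2 * y2 - (1 + α1 - α2 + 2 * α3) * x1
      + ((1 : ℚ)/2) • x1i)
    (hq2 : q2 = x2 * x1i)
    (hp2 : p2 = x1 * y2 - ((1 : ℚ)/2) • (1 : R)) :
    q1 * p1 - p1 * q1 = h ∧ q2 * p2 - p2 * q2 = h ∧
    q1 * q2 - q2 * q1 = 0 ∧ p1 * p2 - p2 * p1 = 0 ∧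
    q1 * p2 - p2 * q1 = 0 ∧ q2 * p1 - p1 * q2 = 0 := by
  let u : Rˣ := ⟨x1, x1i, hx1ir, hx1il⟩
  have H : IsCanonical h (u : R) y1 x2 y2 := ⟨hx1y1, hx2y2, hx1x2, hy1y2, hx1y2, hx2y1⟩
  have hA : ∀ r, Commute (1 + α1 - α2 + 2 * α3) r := fun r =>
    (((Commute.one_left r).add_left (hA1 r)).sub_left (hA2 r)).add_left
      ((Commute.ofNat_left 2 r).mul_left (hA3 r))
  have hc : ∀ r, Commute (algebraMap ℚ R (1 / 2)) r := Algebra.commutes _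
  have hp1' : p1 = -(x1 * euler x1 y1 x2 y2) - (1 + α1 - α2 + 2 * α3) * x1
      + algebraMap ℚ R (1 / 2) * x1i := by
    rw [hp1, euler, Algebra.smul_def]; noncomm_ring
  have hp2' : p2 = x1 * y2 - algebraMap ℚ R (1 / 2) := by
    rw [hp2, Algebra.smul_def, mul_one]
  obtain ⟨h₁, h₂, h₃, h₄, h₅, h₆⟩ := H.r5 hh hA hc hc
  rw [hq1, hq2, hp1', hp2']
  exact ⟨h₁, h₂, h₃, h₄, h₅, h₆⟩
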